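/- The twisted-cube support C(c,ℓ) is closed in ℝ^n (with the Euclidean topology) if and only if m_σ ∈ C(c,ℓ) for every sign vector σ ∈ {+,−}^n. -/

import Mathlib

/-!
Each `m_σ` satisfies (S-k) exactly when `A_k(m_σ) ≥ 0`.

If all `m_σ` lie in `C(c,ℓ)`, then `C(c,ℓ)` is the polytope `P(c,ℓ)`, hence closed: over the
points satisfying `0 ≤ x_j ≤ A_j(x)` for `j > k`, the affine function `A_k` is minimised by a
greedy choice of each coordinate, from the bottom up, at one of its bounds `0` or `A_j(x)`; that
is, at some `m_σ`. So `A_k ≥ 0` there, and by downward induction the branch `A_k(x) < x_k < 0`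
of (S-k) never occurs on `C(c,ℓ)`.

Conversely, if `x` satisfies (S-j) for all `j > k` but `A_k(x) < 0`, move `x_k` to `s A_k(x)`
with `0 < s < 1` and fill in the coordinates below `k` continuously so that (S-j) holds. These
points lie in `C(c,ℓ)`, while their limit at `s = 1` violates (S-k). So if `C(c,ℓ)` is closed,
downward induction shows that every `m_σ` satisfies every (S-k).
-/

/-- The affine functions `A_j(x) = ℓ_j − Σ_{k>j} c_{jk} x_k` (for the top index the sum
is empty so `A_n = ℓ_n`). Indices are 0-based via `Fin n`. -/
def Afun (n : ℕ) (c : Fin n → Fin n → ℤ) (L : Fin n → ℤ) (j : Fin n) (x : Fin n → ℝ) : ℝ :=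
  (L j : ℝ) - ∑ k ∈ Finset.univ.filter (fun k => j < k), (c j k : ℝ) * x k

/-- Condition (S-k): `A_k(x) < x_k < 0` or `0 ≤ x_k ≤ A_k(x)`. -/
def Scond (n : ℕ) (c : Fin n → Fin n → ℤ) (L : Fin n → ℤ) (k : Fin n) (x : Fin n → ℝ) : Prop :=
  (Afun n c L k x < x k ∧ x k < 0) ∨ (0 ≤ x k ∧ x k ≤ Afun n c L k x)

/-- The twisted-cube support `C(c,ℓ)`. -/
def Cset (n : ℕ) (c : Fin n → Fin n → ℤ) (L : Fin n → ℤ) : Set (Fin n → ℝ) :=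
  {x | ∀ k, Scond n c L k x}

/-- The polytope `P(c,ℓ) = {x : 0 ≤ x_j ≤ A_j(x) for all j}`. -/
def Pset (n : ℕ) (c : Fin n → Fin n → ℤ) (L : Fin n → ℤ) : Set (Fin n → ℝ) :=
  {x | ∀ j, 0 ≤ x j ∧ x j ≤ Afun n c L j x}

/-- Condition (P): for each `k`, whenever the coordinates above `k` satisfy
`0 ≤ x_j ≤ A_j(x)`, one has `A_k(x) ≥ 0`. (For the top index this says `ℓ_n ≥ 0`.) -/
def CondP (n : ℕ) (c : Fin n → Fin n → ℤ) (L : Fin n → ℤ) : Prop :=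
  ∀ k : Fin n, ∀ x : Fin n → ℝ,
    (∀ j : Fin n, k < j → 0 ≤ x j ∧ x j ≤ Afun n c L j x) →
    0 ≤ Afun n c L k x

/-- The Cartier data `m_σ` for a sign vector `σ` (`true` = `+`, `false` = `−`), defined by
downward recursion: `m_{σ,j} = 0` if `σ_j = +`, and `m_{σ,j} = A_j(m_σ)` if `σ_j = −`. -/
noncomputable def mvec (n : ℕ) (c : Fin n → Fin n → ℤ) (L : Fin n → ℤ)
    (σ : Fin n → Bool) (j : Fin n) : ℝ :=
  if σ j then 0
  else (L j : ℝ) - ∑ k ∈ (Finset.univ.filter (fun k => j < k)).attach,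
      (c j k.1 : ℝ) * mvec n c L σ k.1
termination_by n - j.1
decreasing_by
  have hk := Fin.lt_iff_val_lt_val.mp (Finset.mem_filter.mp k.2).2
  have := k.1.isLt
  omega

open Finset

section TwistedCube

variable {n : ℕ} {c : Fin n → Fin n → ℤ} {L : Fin n → ℤ}

lemma Afun_congr {j : Fin n} {x y : Fin n → ℝ} (h : ∀ i, j < i → x i = y i) :
    Afun n c L j x = Afun n c L j y := by
  unfold Afun
  congr 1
  exact sum_congr rfl fun i hi => by rw [h i (mem_filter.mp hi).2]

lemma Scond_congr {j : Fin n} {x y : Fin n → ℝ} (h : ∀ i, j ≤ i → x i = y i) :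
    Scond n c L j x ↔ Scond n c L j y := by
  rw [Scond, Scond, h j le_rfl, Afun_congr fun i hi => h i hi.le]

variable (c L) in
lemma continuous_Afun (j : Fin n) : Continuous (Afun n c L j) := by
  unfold Afun
  fun_prop

lemma mvec_eq (σ : Fin n → Bool) (j : Fin n) :
    mvec n c L σ j = if σ j then 0 else Afun n c L j (mvec n c L σ) := by
  rw [mvec, Afun, sum_attach _ fun k => (c j k : ℝ) * mvec n c L σ k]

lemma Scond_mvec_iff (σ : Fin n → Bool) (k : Fin n) :
    Scond n c L k (mvec n c L σ) ↔ 0 ≤ Afun n c L k (mvec n c L σ) := by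
  rw [Scond, mvec_eq σ k]
  split_ifs <;> simp

lemma mvec_congr {σ σ' : Fin n → Bool} {j : Fin n} (h : ∀ i, j ≤ i → σ i = σ' i) :
    mvec n c L σ j = mvec n c L σ' j := by
  induction j using WellFoundedGT.induction with
  | _ j ih =>
    rw [mvec_eq, mvec_eq, h j le_rfl]
    congr 1
    exact Afun_congr fun i hi => ih i hi fun i' hi' => h i' (hi.le.trans hi')

lemma mvec_update_of_lt (σ : Fin n → Bool) {a i : Fin n} (b : Bool) (h : a < i) :
    mvec n c L (Function.update σ a b) i = mvec n c L σ i :=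
  mvec_congr fun _ hi' => Function.update_of_ne (h.trans_le hi').ne' _ _

theorem exists_mvec_sum_le {S : Finset (Fin n)} (hS : IsUpperSet (S : Set (Fin n)))
    (w x : Fin n → ℝ) (hx : ∀ i ∈ S, 0 ≤ x i ∧ x i ≤ Afun n c L i x) :
    ∃ σ, ∑ i ∈ S, w i * x i ≤ ∑ i ∈ S, w i * mvec n c L σ i := by
  induction S using Finset.induction_on_min generalizing w with
  | empty => exact ⟨fun _ => true, by simp⟩
  | insert a s has ih =>
    have ha : a ∉ s := fun h => lt_irrefl a (has a h)
    have hs_eq : univ.filter (a < ·) = s := by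
      ext i
      simp only [mem_filter, mem_univ, true_and]
      refine ⟨fun hi => ?_, has i⟩
      have := hS hi.le (by simp)
      simpa [hi.ne'] using this
    have hs : IsUpperSet (s : Set (Fin n)) := fun i j hij hi => by
      have := hS hij (by simp [mem_coe.mp hi])
      simpa [((has i hi).trans_le hij).ne'] using this
    obtain ⟨hxa₀, hxaA⟩ := hx a (mem_insert_self a s)
    have hxs := fun i hi => hx i (mem_insert_of_mem hi)
    have hsum : ∀ σ b, ∑ i ∈ s, w i * mvec n c L (Function.update σ a b) i
        = ∑ i ∈ s, w i * mvec n c L σ i :=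
      fun σ b => sum_congr rfl fun i hi => by rw [mvec_update_of_lt σ b (has i hi)]
    rw [sum_insert ha]
    rcases lt_or_ge (w a) 0 with hwa | hwa
    · obtain ⟨σ, hσ⟩ := ih hs w hxs
      refine ⟨Function.update σ a true, ?_⟩
      rw [sum_insert ha, hsum, mvec_eq _ a, Function.update_self, if_pos rfl]
      nlinarith
    · -- raising `x a` to `A_a(x)` moves the weight `w a` onto the coordinates above `a`
      set w' : Fin n → ℝ := fun i => w i - w a * c a i
      have key : ∀ z : Fin n → ℝ, w a * Afun n c L a z + ∑ i ∈ s, w i * z i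
          = w a * L a + ∑ i ∈ s, w' i * z i := by
        intro z
        simp only [Afun, hs_eq, w', mul_sub, mul_sum, sub_mul, sum_sub_distrib, mul_assoc]
        ring
      obtain ⟨σ, hσ⟩ := ih hs w' hxs
      refine ⟨Function.update σ a false, ?_⟩
      rw [sum_insert ha, hsum, mvec_eq _ a, Function.update_self, if_neg Bool.false_ne_true,
        Afun_congr fun i hi => mvec_update_of_lt σ false hi]
      calc w a * x a + ∑ i ∈ s, w i * x i
          ≤ w a * Afun n c L a x + ∑ i ∈ s, w i * x i := by gcongr
        _ = w a * L a + ∑ i ∈ s, w' i * x i := key x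
        _ ≤ w a * L a + ∑ i ∈ s, w' i * mvec n c L σ i := by gcongr
        _ = _ := (key _).symm

theorem condP_of_forall_mvec_mem (h : ∀ σ, mvec n c L σ ∈ Cset n c L) : CondP n c L := by
  intro k x hx
  have hS : IsUpperSet ((univ.filter (k < ·) : Finset (Fin n)) : Set (Fin n)) := by
    simpa [filter_lt_eq_Ioi] using isUpperSet_Ioi k
  obtain ⟨σ, hσ⟩ := exists_mvec_sum_le hS (fun i => c k i) x fun i hi => hx i (mem_filter.mp hi).2
  have hm := (Scond_mvec_iff σ k).mp (h σ k)
  simp only [Afun] at hm ⊢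
  linarith

theorem Cset_eq_Pset_of_condP (h : CondP n c L) : Cset n c L = Pset n c L := by
  refine Set.Subset.antisymm (fun x hx k => ?_) fun x hx k => .inr (hx k)
  induction k using WellFoundedGT.induction with
  | _ k ih =>
    have hA := h k x ih
    rcases hx k with ⟨h₁, h₂⟩ | hk
    · linarith
    · exact hk

variable (c L) in
theorem isClosed_Pset : IsClosed (Pset n c L) := by
  simp only [Pset, Set.ofPred_forall, Set.ofPred_and]
  exact isClosed_iInter fun j => (isClosed_le continuous_const (continuous_apply j)).inter
    (isClosed_le (continuous_apply j) (continuous_Afun c L j))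

-- `min (A_j, 0) / 2` satisfies (S-j) whatever the sign of `A_j`, and depends continuously on it.
variable (n c L) in
noncomputable def fillBelow (k : Fin n) (z : Fin n → ℝ) (j : Fin n) : ℝ :=
  if k ≤ j then z j
  else min ((L j : ℝ) - ∑ i ∈ (univ.filter (j < ·)).attach,
      (c j i.1 : ℝ) * fillBelow k z i.1) 0 / 2
termination_by n - j.1
decreasing_by
  have := Fin.lt_def.mp (mem_filter.mp i.2).2
  omega

lemma fillBelow_of_le {k j : Fin n} (z : Fin n → ℝ) (h : k ≤ j) :
    fillBelow n c L k z j = z j := by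
  rw [fillBelow, if_pos h]

lemma fillBelow_of_lt {k j : Fin n} (z : Fin n → ℝ) (h : j < k) :
    fillBelow n c L k z j = min (Afun n c L j (fillBelow n c L k z)) 0 / 2 := by
  rw [fillBelow, if_neg h.not_ge, Afun, sum_attach _ fun i => (c j i : ℝ) * fillBelow n c L k z i]

lemma Scond_fillBelow_of_lt {k j : Fin n} (z : Fin n → ℝ) (h : j < k) :
    Scond n c L j (fillBelow n c L k z) := by
  rw [Scond, fillBelow_of_lt z h]
  rcases le_or_gt 0 (Afun n c L j (fillBelow n c L k z)) with hA | hA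
  · right
    rw [min_eq_right hA]
    simpa using hA
  · left
    rw [min_eq_left hA.le]
    constructor <;> linarith

lemma continuous_fillBelow (k : Fin n) : Continuous (fillBelow n c L k) := by
  refine continuous_pi fun j => ?_
  induction j using WellFoundedGT.induction with
  | _ j ih =>
    by_cases hkj : k ≤ j
    · simpa only [fillBelow_of_le _ hkj] using continuous_apply j
    · simp only [fillBelow_of_lt _ (not_le.mp hkj), Afun]
      exact ((continuous_const.sub (continuous_finsetSum _ fun i hi =>
        continuous_const.mul (ih i (mem_filter.mp hi).2))).min continuous_const).div_const 2

theorem Afun_nonneg_of_isClosed (hC : IsClosed (Cset n c L)) {k : Fin n} {x : Fin n → ℝ}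
    (hx : ∀ j, k < j → Scond n c L j x) : 0 ≤ Afun n c L k x := by
  by_contra! hneg
  set γ : ℝ → Fin n → ℝ := fun s => fillBelow n c L k (Function.update x k (s * Afun n c L k x))
  have hγ : Continuous γ :=
    (continuous_fillBelow k).comp (continuous_const.update k (continuous_id.mul continuous_const))
  have hγ_above : ∀ s i, k < i → γ s i = x i := fun s i hi => by
    simp [γ, fillBelow_of_le _ hi.le, Function.update_of_ne hi.ne']
  have hγk : ∀ s, γ s k = s * Afun n c L k x := fun s => by simp [γ, fillBelow_of_le _ le_rfl]
  have hAγ : ∀ s, Afun n c L k (γ s) = Afun n c L k x := fun s => Afun_congr (hγ_above s)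
  have hmem : ∀ s ∈ Set.Ioo (0 : ℝ) 1, γ s ∈ Cset n c L := by
    intro s hs j
    rcases lt_trichotomy j k with hj | rfl | hj
    · exact Scond_fillBelow_of_lt _ hj
    · left
      rw [hγk, hAγ]
      constructor <;> nlinarith [hs.1, hs.2]
    · exact (Scond_congr fun i hi => hγ_above s i (hj.trans_le hi)).mpr (hx j hj)
  have h₁ : γ 1 ∈ Cset n c L := hC.mem_of_tendsto ((hγ.tendsto 1).mono_left nhdsWithin_le_nhds)
    (Filter.mem_of_superset (Ioo_mem_nhdsLT one_pos) hmem)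
  have := h₁ k
  rw [Scond, hγk, hAγ, one_mul] at this
  rcases this with ⟨h, _⟩ | ⟨h, _⟩ <;> linarith

theorem mvec_mem_of_isClosed (hC : IsClosed (Cset n c L)) (σ : Fin n → Bool) :
    mvec n c L σ ∈ Cset n c L := by
  intro k
  induction k using WellFoundedGT.induction with
  | _ k ih => exact (Scond_mvec_iff σ k).mpr (Afun_nonneg_of_isClosed hC ih)

end TwistedCube

theorem isClosed_Cset_iff_mvec_mem_general (n : ℕ)
    (c : Fin n → Fin n → ℤ) (L : Fin n → ℤ) :
    IsClosed (Cset n c L) ↔ ∀ σ : Fin n → Bool, mvec n c L σ ∈ Cset n c L :=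
  ⟨mvec_mem_of_isClosed, fun h => Cset_eq_Pset_of_condP (condP_of_forall_mvec_mem h) ▸
    isClosed_Pset c L⟩

/-- `C(c,ℓ)` is closed iff `m_σ ∈ C(c,ℓ)` for every sign vector `σ`. -/
theorem isClosed_Cset_iff_mvec_mem (n : ℕ) (hn : 0 < n)
    (c : Fin n → Fin n → ℤ) (L : Fin n → ℤ) :
    IsClosed (Cset n c L) ↔ ∀ σ : Fin n → Bool, mvec n c L σ ∈ Cset n c L :=
  isClosed_Cset_iff_mvec_mem_general n c L
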